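/- arXiv:2008.10209 — 6 statements merged into one kernel-verified Lean document; each statement's English description precedes it below -/
import Mathlib

section
/- Let S ⊆ [0,∞) with 0 ∈ S, and let (X,d) be an ultrametric space all of whose distances lie in S. Then the completion of (X,d) is an ultrametric space all of whose distances lie in S (in particular, the distance set of the completion is contained in the distance set of (X,d) together with 0, no new positive values appear beyond limits that coincide with existing values; precisely: every distance in the completion equals a distance realized in X or is 0). -/
open UniformSpace

theorem ultra_completion (X : Type*) [MetricSpace X] [IsUltrametricDist X] :
    ∀ p q r : UniformSpace.Completion X, dist p q ≤ max (dist p r) (dist r q) := by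
  have : ∀ p q r : Completion X, (p, q, r) ∈
      {t : Completion X × Completion X × Completion X |
        dist t.1 t.2.1 ≤ max (dist t.1 t.2.2) (dist t.2.2 t.2.1)} := by
    intro p q r
    refine Completion.induction_on₃ p q r ?_ ?_
    · have : IsClosed {t : Completion X × Completion X × Completion X |
          dist t.1 t.2.1 ≤ max (dist t.1 t.2.2) (dist t.2.2 t.2.1)} :=
        isClosed_le (by fun_prop) (by fun_prop)
      exact this
    · intro a b c
      simp only [Set.mem_setOf_eq, Completion.dist_eq]
      exact IsUltrametricDist.dist_triangle_max a c b
  exact this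

/-- The completion of an `S`-valued ultrametric space is an `S`-valued
ultrametric space; moreover every distance in the completion is realized as a distance
in `X` or is `0`. -/
theorem stmt7 (S : Set ℝ) (hS : S ⊆ Set.Ici 0) (h0 : (0:ℝ) ∈ S)
    (X : Type*) [MetricSpace X] [IsUltrametricDist X]
    (hval : ∀ x y : X, dist x y ∈ S) :
    (∀ p q r : UniformSpace.Completion X, dist p q ≤ max (dist p r) (dist r q)) ∧
    (∀ p q : UniformSpace.Completion X,
      (∃ x y : X, dist p q = dist x y) ∨ dist p q = 0) ∧
    (∀ p q : UniformSpace.Completion X, dist p q ∈ S) := by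
  have ultra := ultra_completion X
  have key : ∀ p q : Completion X,
      (∃ x y : X, dist p q = dist x y) ∨ dist p q = 0 := by
    intro p q
    rcases eq_or_lt_of_le (dist_nonneg (x := p) (y := q)) with h | h
    · exact Or.inr h.symm
    · left
      have hd := Metric.denseRange_iff.mp (Completion.denseRange_coe (α := X))
      obtain ⟨x, hx⟩ := hd p _ h
      obtain ⟨y, hy⟩ := hd q _ h
      refine ⟨x, y, le_antisymm ?_ ?_⟩
      · -- dist p q ≤ dist x y
        have h1 : dist p q ≤ max (dist p (x:Completion X)) (dist (x:Completion X) q) :=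
          ultra _ _ _
        have h2 : dist (x:Completion X) q ≤
            max (dist (x:Completion X) (y:Completion X)) (dist (y:Completion X) q) :=
          ultra _ _ _
        rw [dist_comm q (y:Completion X)] at hy
        rcases le_max_iff.mp h1 with h1' | h1'
        · linarith
        rcases le_max_iff.mp h2 with h2' | h2'
        · calc dist p q ≤ dist (x:Completion X) (y:Completion X) := le_trans h1' h2'
            _ = dist x y := Completion.dist_eq x y
        · linarith
      · -- dist x y ≤ dist p q
        have h1 : dist (x:Completion X) (y:Completion X) ≤
            max (dist (x:Completion X) p) (dist p (y:Completion X)) := ultra _ _ _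
        have h2 : dist p (y:Completion X) ≤
            max (dist p q) (dist q (y:Completion X)) := ultra _ _ _
        rw [show dist x y = dist (x:Completion X) (y:Completion X) from
          (Completion.dist_eq x y).symm]
        have hc1 : dist (x:Completion X) p = dist p (x:Completion X) := dist_comm _ _
        have hc2 : dist q (y:Completion X) = dist q (y:Completion X) := rfl
        rcases le_max_iff.mp h1 with h1' | h1'
        · linarith
        rcases le_max_iff.mp h2 with h2' | h2'
        · linarith
        · linarith
  refine ⟨ultra, key, fun p q => ?_⟩
  rcases key p q with ⟨x, y, hxy⟩ | h
  · rw [hxy]; exact hval x y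
  · rw [h]; exact h0
end

section
/- Let X be an ultrametrizable topological space and A a nonempty closed subset of X. Then every continuous map f : A → Y into an arbitrary topological space Y extends to a continuous map F : X → Y with F|_A = f. -/
/-!
The distance function `d = infDist · A` is constant on each ball `B(x, d x)` with `x ∉ A`, and
these balls partition `Aᶜ` into clopen pieces. Sending every point of such a ball to one point
`a ∈ A` chosen with `dist y a < 2 d y` on the whole ball gives a retraction `X → A` that is locally
constant off `A` and moves each point `y` by at most `2 d y`, hence is continuous at `A` as well.
Composing `f` with it extends `f`.
-/

open Metric

namespace IsUltrametricDist

variable {X : Type*} [MetricSpace X] {A : Set X} {a x y z : X}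

lemma notMem_of_mem_ball_infDist (hy : y ∈ ball x (infDist x A)) : y ∉ A := fun hyA =>
  (infDist_le_dist_of_mem hyA).not_gt (by rwa [mem_ball'] at hy)

open Classical in
variable (A) in
/-- The chosen value depends on `x ∉ A` only through the ball `B(x, infDist x A)`, which makes the
retraction locally constant off `A`. -/
noncomputable def retraction [Nonempty X] (x : X) : X :=
  if x ∈ A then x else
    Classical.epsilon fun a => a ∈ A ∧ ∀ y ∈ ball x (infDist x A), dist y a < 2 * infDist y A

lemma retraction_of_mem [Nonempty X] (hx : x ∈ A) : retraction A x = x := if_pos hx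

variable [IsUltrametricDist X]

lemma dist_eq_of_dist_lt (h : dist y x < dist x z) : dist y z = dist x z :=
  (dist_eq_max_of_dist_ne_dist _ _ _ h.ne).trans (max_eq_right h.le)

lemma infDist_eq_of_mem_ball_infDist (hy : y ∈ ball x (infDist x A)) :
    infDist y A = infDist x A := by
  simp only [infDist_eq_iInf]
  congr with a
  exact dist_eq_of_dist_lt (hy.trans_le (infDist_le_dist_of_mem a.2))

lemma ball_infDist_eq_of_mem_ball_infDist (hy : y ∈ ball x (infDist x A)) :
    ball y (infDist y A) = ball x (infDist x A) := by
  rw [infDist_eq_of_mem_ball_infDist hy, ball_eq_of_mem hy]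

lemma exists_mem_forall_mem_ball_infDist_dist_lt (hAne : A.Nonempty) (x : X) :
    ∃ a ∈ A, ∀ y ∈ ball x (infDist x A), dist y a < 2 * infDist y A := by
  rcases (infDist_nonneg (x := x) (s := A)).eq_or_lt with hx | hx
  · obtain ⟨a, ha⟩ := hAne
    exact ⟨a, ha, fun y hy => by simp [← hx] at hy⟩
  obtain ⟨a, ha, hxa⟩ := (infDist_lt_iff hAne).mp (by linarith : infDist x A < 2 * infDist x A)
  refine ⟨a, ha, fun y hy => ?_⟩
  rw [infDist_eq_of_mem_ball_infDist hy]
  calc dist y a ≤ max (dist y x) (dist x a) := dist_triangle_max y x a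
    _ < 2 * infDist x A := max_lt ((mem_ball.mp hy).trans (by linarith)) hxa

variable [Nonempty X]

lemma retraction_spec_of_notMem (hAne : A.Nonempty) (hx : x ∉ A) :
    retraction A x ∈ A ∧
      ∀ y ∈ ball x (infDist x A), dist y (retraction A x) < 2 * infDist y A := by
  rw [retraction, if_neg hx]
  exact Classical.epsilon_spec (exists_mem_forall_mem_ball_infDist_dist_lt hAne x)

lemma retraction_mem (hAne : A.Nonempty) (x : X) : retraction A x ∈ A := by
  by_cases hx : x ∈ A
  · rwa [retraction_of_mem hx]
  · exact (retraction_spec_of_notMem hAne hx).1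

lemma retraction_eq_of_mem_ball_infDist (hx : x ∉ A) (hy : y ∈ ball x (infDist x A)) :
    retraction A y = retraction A x := by
  rw [retraction, retraction, if_neg hx, if_neg (notMem_of_mem_ball_infDist hy),
    ball_infDist_eq_of_mem_ball_infDist hy]

variable (hA : IsClosed A) (hAne : A.Nonempty)
include hA hAne

lemma dist_retraction_le (x : X) : dist x (retraction A x) ≤ 2 * infDist x A := by
  by_cases hx : x ∈ A
  · rw [retraction_of_mem hx, dist_self]
    exact mul_nonneg zero_le_two infDist_nonneg
  · have hpos : 0 < infDist x A := (hA.notMem_iff_infDist_pos hAne).mp hx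
    exact ((retraction_spec_of_notMem hAne hx).2 x (mem_ball_self hpos)).le

lemma dist_retraction_le_of_mem (ha : a ∈ A) (y : X) :
    dist (retraction A y) a ≤ 2 * dist y a := by
  have hmove : dist y (retraction A y) ≤ 2 * dist y a :=
    (dist_retraction_le hA hAne y).trans (by gcongr; exact infDist_le_dist_of_mem ha)
  calc dist (retraction A y) a ≤ max (dist (retraction A y) y) (dist y a) :=
        dist_triangle_max _ y a
    _ ≤ 2 * dist y a := by
      rw [dist_comm]
      exact max_le hmove (by linarith [dist_nonneg (x := y) (y := a)])

lemma continuous_retraction : Continuous (retraction A) := by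
  refine continuous_iff_continuousAt.mpr fun x => ?_
  by_cases hx : x ∈ A
  · rw [ContinuousAt, retraction_of_mem hx]
    refine tendsto_iff_dist_tendsto_zero.mpr (squeeze_zero (fun _ => dist_nonneg)
      (dist_retraction_le_of_mem hA hAne hx) ?_)
    exact (continuous_const.mul (continuous_id.dist continuous_const)).tendsto' x 0 (by simp)
  · have hball : ball x (infDist x A) ∈ nhds x :=
      ball_mem_nhds x ((hA.notMem_iff_infDist_pos hAne).mp hx)
    exact continuousAt_const.congr
      (Filter.eventually_of_mem hball fun y hy => (retraction_eq_of_mem_ball_infDist hx hy).symm)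

end IsUltrametricDist

open IsUltrametricDist in
/-- Over an ultrametrizable space `X`, every continuous map from a
nonempty closed subset `A` into an arbitrary topological space `Y` extends
continuously to all of `X`. -/
theorem stmt13 (X : Type*) [MetricSpace X] [IsUltrametricDist X]
    (A : Set X) (hA : IsClosed A) (hAne : A.Nonempty)
    (Y : Type*) [TopologicalSpace Y] (f : A → Y) (hf : Continuous f) :
    ∃ F : X → Y, Continuous F ∧ ∀ a : A, F a = f a := by
  have : Nonempty X := hAne.to_subtype.map Subtype.val
  let r : X → A := Set.codRestrict (retraction A) A (retraction_mem hAne)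
  refine ⟨f ∘ r, hf.comp ((continuous_retraction hA hAne).codRestrict _), fun a => ?_⟩
  exact congrArg f (Subtype.ext (retraction_of_mem a.2))
end

section
/- Let S ⊆ [0,∞) with 0 ∈ S, let M be an infinite countable set, and suppose S contains a strictly decreasing sequence converging to 0. Then there exists a non-complete ultrametric d on M, with all values in S, whose induced topology is discrete. (Explicitly, for an injection of ℕ onto M and a strictly decreasing sequence a(i) → 0 in S, set d(n,m) = max(a(n), a(m)) for n ≠ m and d(n,n)=0; this d is a discrete-topology-inducing non-complete S-valued ultrametric.) -/
/-- If a range set `S` contains a strictly decreasing sequence converging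
to `0`, then on every countably infinite set `M` there is an `S`-valued ultrametric
inducing the discrete topology that is not complete. -/
theorem stmt14 (S : Set ℝ) (hS : S ⊆ Set.Ici 0) (h0 : (0:ℝ) ∈ S)
    (hcoi : ∃ a : ℕ → ℝ, (∀ n, a n ∈ S) ∧ StrictAnti a ∧
      Filter.Tendsto a Filter.atTop (nhds 0))
    (M : Type*) [Countable M] [Infinite M] :
    ∃ d : M → M → ℝ,
      (∀ x y, 0 ≤ d x y) ∧
      (∀ x y, d x y = 0 ↔ x = y) ∧
      (∀ x y, d x y = d y x) ∧
      (∀ x y z, d x y ≤ max (d x z) (d z y)) ∧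
      (∀ x y, d x y ∈ S) ∧
      -- the induced topology is discrete: every singleton is an open ball
      (∀ x : M, ∃ ε > (0:ℝ), ∀ y, d x y < ε → y = x) ∧
      -- `d` is not complete: some Cauchy sequence has no limit
      ¬ (∀ u : ℕ → M,
          (∀ ε > (0:ℝ), ∃ N, ∀ m ≥ N, ∀ n ≥ N, d (u m) (u n) < ε) →
          ∃ x : M, ∀ ε > (0:ℝ), ∃ N, ∀ n ≥ N, d (u n) x < ε) := by
  classical
  obtain ⟨a, haS, hanti, hlim⟩ := hcoi
  obtain ⟨den⟩ := nonempty_denumerable M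
  let e : M ≃ ℕ := den.eqv M
  -- a is positive
  have hapos : ∀ n, 0 < a n := fun n => by
    have h1 : a (n+1) < a n := hanti (Nat.lt_succ_self n)
    have h2 : 0 ≤ a (n+1) := hS (haS (n+1))
    linarith
  set d : M → M → ℝ := fun x y => if x = y then 0 else max (a (e x)) (a (e y)) with hd
  have dself : ∀ x, d x x = 0 := fun x => if_pos rfl
  have dne : ∀ x y, x ≠ y → d x y = max (a (e x)) (a (e y)) := fun x y h => if_neg h
  have dnonneg : ∀ x y, 0 ≤ d x y := by
    intro x y
    by_cases h : x = y
    · simp [hd, h]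
    · rw [dne x y h]; exact le_max_of_le_left (hapos _).le
  refine ⟨d, dnonneg, ?_, ?_, ?_, ?_, ?_, ?_⟩
  · intro x y
    constructor
    · intro h
      by_contra hne
      rw [dne x y hne] at h
      exact absurd h (ne_of_gt (lt_max_of_lt_left (hapos _)))
    · intro h; subst h; exact dself x
  · intro x y
    by_cases h : x = y
    · subst h; rfl
    · rw [dne x y h, dne y x (Ne.symm h), max_comm]
  · intro x y z
    by_cases hxy : x = y
    · subst hxy; rw [dself]; exact le_max_of_le_left (dnonneg x z)
    by_cases hxz : x = z
    · subst hxz; rw [dself]; simp [dne x y hxy]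
    by_cases hzy : z = y
    · subst hzy; rw [dself]
      simp [dne x z hxy]
    rw [dne x y hxy, dne x z hxz, dne z y hzy]
    rw [max_le_iff]
    constructor
    · exact le_max_of_le_left (le_max_left _ _)
    · exact le_max_of_le_right (le_max_right _ _)
  · intro x y
    by_cases h : x = y
    · simp [hd, h, h0]
    · rw [dne x y h]
      rcases max_cases (a (e x)) (a (e y)) with ⟨h1, _⟩ | ⟨h1, _⟩ <;> rw [h1] <;>
        exact haS _
  · intro x
    refine ⟨a (e x), hapos _, fun y hy => ?_⟩
    by_contra hne
    rw [dne x y (Ne.symm hne)] at hy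
    exact absurd hy (not_lt.mpr (le_max_left _ _))
  · intro h
    have hc : ∀ ε > (0:ℝ), ∃ N, ∀ m ≥ N, ∀ n ≥ N,
        d (e.symm m) (e.symm n) < ε := by
      intro ε hε
      obtain ⟨N, hN⟩ := (Metric.tendsto_atTop.mp hlim) ε hε
      refine ⟨N, fun m hm n hn => ?_⟩
      by_cases hmn : e.symm m = e.symm n
      · rw [hmn, dself]; exact hε
      · rw [dne _ _ hmn]
        simp only [Equiv.apply_symm_apply]
        have h1 : a m < ε := by
          have := hN m hm; rwa [Real.dist_eq, abs_of_pos (by linarith [hapos m] : (0:ℝ) < a m - 0), sub_zero] at this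
        have h2 : a n < ε := by
          have := hN n hn; rwa [Real.dist_eq, abs_of_pos (by linarith [hapos n] : (0:ℝ) < a n - 0), sub_zero] at this
        exact max_lt h1 h2
    obtain ⟨x, hx⟩ := h (fun n => e.symm n) hc
    · -- contradiction
      obtain ⟨N, hN⟩ := hx (a (e x)) (hapos _)
      set n := max N (e x + 1) with hn
      have hne : e.symm n ≠ x := by
        intro heq
        have : n = e x := by
          have := congrArg e heq
          simpa using this
        omega
      have := hN n (le_max_left _ _)
      rw [dne _ _ hne] at this
      have : a (e x) < a (e x) := lt_of_le_of_lt (le_max_right _ _) this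
      exact lt_irrefl _ this
end

section
/- Let S ⊆ [0,∞) with 0 ∈ S and S containing a positive element, let M be a set with a distinguished point o ∈ M. Let L(S, M, o) be the set of functions f : S ∖ {0} → M that are eventually o-valued (there exists C ∈ S, C > 0, such that f(q) = o for all q > C). Define Δ(f,g) = sup{q ∈ S, q > 0 : f(q) ≠ g(q)} (and 0 if the set is empty). Then (L(S,M,o), Δ) is a complete ultrametric space whose distances lie in the closure of S in [0,∞). -/
/-- The positive part of a range set `S`, as a subtype. -/
def Spos (S : Set ℝ) : Type := {q : ℝ // q ∈ S ∧ q ≠ 0}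

/-- Eventually `o`-valued maps from `S₊` to `M` (with the eventual bound in `S₊`). -/
def LL (S : Set ℝ) (M : Type*) (o : M) : Type _ :=
  {f : Spos S → M // ∃ C ∈ S, 0 < C ∧ ∀ q : Spos S, C < q.1 → f q = o}

/-- The Lemin–Lemin distance: the supremum of the points where `f` and `g` differ
(and `0` if they agree everywhere). -/
noncomputable def LLdist {S : Set ℝ} {M : Type*} {o : M} (f g : LL S M o) : ℝ :=
  sSup ({0} ∪ {q : ℝ | ∃ h : q ∈ S ∧ q ≠ 0, f.1 ⟨q, h⟩ ≠ g.1 ⟨q, h⟩})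

/-!
For `r ≥ 0`, `Δ(f, g) ≤ r` exactly when `f` and `g` agree at every point of `S₊` above `r`;
the ultrametric inequality follows at once. For a Cauchy sequence `u` and `q ∈ S₊`, the sequence `u n q` is
constant from the point where `Δ(u m, u n) < q` for all later `m, n`, and these eventual values
form the limit; it agrees above some positive element of `S` with a single `u k`, hence it is
eventually `o`.
-/

lemma Spos.val_pos {S : Set ℝ} (hS : S ⊆ Set.Ici 0) (q : Spos S) : 0 < q.1 :=
  lt_of_le_of_ne (hS q.2.1) (Ne.symm q.2.2)

namespace LL

variable {S : Set ℝ} {M : Type*} {o : M}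

def diffSet (f g : LL S M o) : Set ℝ :=
  {q : ℝ | ∃ h : q ∈ S ∧ q ≠ 0, f.1 ⟨q, h⟩ ≠ g.1 ⟨q, h⟩}

lemma LLdist_eq_sSup (f g : LL S M o) : LLdist f g = sSup ({0} ∪ diffSet f g) := rfl

lemma diffSet_comm (f g : LL S M o) : diffSet f g = diffSet g f := by
  simp only [diffSet, ne_comm]

lemma bddAbove_zero_union_diffSet (f g : LL S M o) : BddAbove ({0} ∪ diffSet f g) := by
  obtain ⟨Cf, -, hCf, hf⟩ := f.2
  obtain ⟨Cg, -, -, hg⟩ := g.2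
  refine ⟨max Cf Cg, ?_⟩
  rintro q (rfl | ⟨hq, hne⟩)
  · exact le_max_of_le_left hCf.le
  · by_contra! hlt
    exact hne ((hf ⟨q, hq⟩ (lt_of_le_of_lt (le_max_left _ _) hlt)).trans
      (hg ⟨q, hq⟩ (lt_of_le_of_lt (le_max_right _ _) hlt)).symm)

lemma LLdist_nonneg (f g : LL S M o) : 0 ≤ LLdist f g :=
  le_csSup (bddAbove_zero_union_diffSet f g) (Or.inl rfl)

lemma LLdist_comm (f g : LL S M o) : LLdist f g = LLdist g f := by
  rw [LLdist_eq_sSup, LLdist_eq_sSup, diffSet_comm]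

lemma apply_eq_of_LLdist_lt {f g : LL S M o} (q : Spos S) (hq : LLdist f g < q.1) :
    f.1 q = g.1 q := by
  by_contra hne
  exact (le_csSup (bddAbove_zero_union_diffSet f g) (Or.inr ⟨q.2, hne⟩)).not_gt hq

lemma LLdist_le_of_forall_gt {f g : LL S M o} {r : ℝ} (hr : 0 ≤ r)
    (h : ∀ q : Spos S, r < q.1 → f.1 q = g.1 q) : LLdist f g ≤ r := by
  refine csSup_le ⟨0, Or.inl rfl⟩ ?_
  rintro q (rfl | ⟨hq, hne⟩)
  · exact hr
  · exact not_lt.1 fun hrq ↦ hne (h ⟨q, hq⟩ hrq)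

lemma LLdist_self (f : LL S M o) : LLdist f f = 0 :=
  le_antisymm (LLdist_le_of_forall_gt le_rfl fun _ _ ↦ rfl) (LLdist_nonneg f f)

lemma eq_of_LLdist_eq_zero (hS : S ⊆ Set.Ici 0) {f g : LL S M o} (h : LLdist f g = 0) :
    f = g :=
  Subtype.ext <| funext fun q ↦ apply_eq_of_LLdist_lt q (h.symm ▸ q.val_pos hS)

lemma LLdist_eq_zero (hS : S ⊆ Set.Ici 0) {f g : LL S M o} : LLdist f g = 0 ↔ f = g :=
  ⟨eq_of_LLdist_eq_zero hS, fun h ↦ h ▸ LLdist_self f⟩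

lemma LLdist_le_max (f g h : LL S M o) : LLdist f g ≤ max (LLdist f h) (LLdist h g) :=
  LLdist_le_of_forall_gt (le_max_of_le_left (LLdist_nonneg f h)) fun q hq ↦
    (apply_eq_of_LLdist_lt q (lt_of_le_of_lt (le_max_left _ _) hq)).trans
      (apply_eq_of_LLdist_lt q (lt_of_le_of_lt (le_max_right _ _) hq))

lemma LLdist_mem_closure (h0 : (0 : ℝ) ∈ S) (f g : LL S M o) : LLdist f g ∈ closure S :=
  closure_mono (Set.union_subset (Set.singleton_subset_iff.2 h0) fun _ hq ↦ hq.fst.1)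
    (csSup_mem_closure ⟨0, Or.inl rfl⟩ (bddAbove_zero_union_diffSet f g))

lemma exists_bound_of_eq_above (g : LL S M o) {F : Spos S → M} {C : ℝ} (hC : C ∈ S)
    (hC0 : 0 < C) (hF : ∀ q : Spos S, C ≤ q.1 → F q = g.1 q) :
    ∃ C ∈ S, 0 < C ∧ ∀ q : Spos S, C < q.1 → F q = o := by
  obtain ⟨C', hC', -, hg⟩ := g.2
  refine ⟨max C C', max_rec' (· ∈ S) hC hC', lt_max_of_lt_left hC0, fun q hq ↦ ?_⟩
  rw [hF q ((le_max_left _ _).trans hq.le)]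
  exact hg q (lt_of_le_of_lt (le_max_right _ _) hq)

theorem exists_tendsto_of_cauchy (hS : S ⊆ Set.Ici 0) (u : ℕ → LL S M o)
    (hu : ∀ ε > (0 : ℝ), ∃ N, ∀ m ≥ N, ∀ n ≥ N, LLdist (u m) (u n) < ε) :
    ∃ f : LL S M o, ∀ ε > (0 : ℝ), ∃ N, ∀ n ≥ N, LLdist (u n) f < ε := by
  choose N hN using hu
  let F : Spos S → M := fun q ↦ (u (N q.1 (q.val_pos hS))).1 q
  have eventually_eq_F (q : Spos S) (n : ℕ) (hn : N q.1 (q.val_pos hS) ≤ n) :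
      (u n).1 q = F q :=
    apply_eq_of_LLdist_lt q (hN _ _ n hn _ le_rfl)
  have eq_F_above (k : ℕ) (r : ℝ) (hk : ∀ m ≥ k, LLdist (u k) (u m) < r) (q : Spos S)
      (hq : r ≤ q.1) : (u k).1 q = F q :=
    (apply_eq_of_LLdist_lt q ((hk _ (le_max_left _ _)).trans_le hq)).trans
      (eventually_eq_F q _ (le_max_right k _))
  obtain ⟨C, hC, hC0, -⟩ := (u 0).2
  have hk := hN C hC0 (N C hC0)
  let f : LL S M o := ⟨F, exists_bound_of_eq_above (u (N C hC0)) hC hC0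
    fun q hq ↦ (eq_F_above _ C (hk le_rfl) q hq).symm⟩
  refine ⟨f, fun ε hε ↦ ⟨N (ε / 2) (half_pos hε), fun n hn ↦ ?_⟩⟩
  have hn' : ∀ m ≥ n, LLdist (u n) (u m) < ε / 2 :=
    fun m hm ↦ hN _ _ n hn m (hn.trans hm)
  calc LLdist (u n) f ≤ ε / 2 :=
        LLdist_le_of_forall_gt (half_pos hε).le fun q hq ↦ eq_F_above n _ hn' q hq.le
    _ < ε := half_lt_self hε

end LL

open LL in
theorem stmt16_general (S : Set ℝ) (hS : S ⊆ Set.Ici 0) (h0 : (0:ℝ) ∈ S)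
    (M : Type*) (o : M) :
    (∀ f g : LL S M o, 0 ≤ LLdist f g) ∧
    (∀ f g : LL S M o, LLdist f g = 0 ↔ f = g) ∧
    (∀ f g : LL S M o, LLdist f g = LLdist g f) ∧
    (∀ f g h : LL S M o, LLdist f g ≤ max (LLdist f h) (LLdist h g)) ∧
    (∀ f g : LL S M o, LLdist f g ∈ closure S) ∧
    (∀ u : ℕ → LL S M o,
      (∀ ε > (0:ℝ), ∃ N, ∀ m ≥ N, ∀ n ≥ N, LLdist (u m) (u n) < ε) →
      ∃ f : LL S M o, ∀ ε > (0:ℝ), ∃ N, ∀ n ≥ N, LLdist (u n) f < ε) :=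
  ⟨LLdist_nonneg, fun _ _ ↦ LLdist_eq_zero hS, LLdist_comm, LLdist_le_max,
    LLdist_mem_closure h0, exists_tendsto_of_cauchy hS⟩

/-- `(L(S,M,o), Δ)` is a complete ultrametric space whose distances lie
in the closure of `S`. -/
theorem stmt16 (S : Set ℝ) (hS : S ⊆ Set.Ici 0) (h0 : (0:ℝ) ∈ S)
    (hpos : ∃ s ∈ S, (0:ℝ) < s) (M : Type*) (o : M) :
    (∀ f g : LL S M o, 0 ≤ LLdist f g) ∧
    (∀ f g : LL S M o, LLdist f g = 0 ↔ f = g) ∧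
    (∀ f g : LL S M o, LLdist f g = LLdist g f) ∧
    (∀ f g h : LL S M o, LLdist f g ≤ max (LLdist f h) (LLdist h g)) ∧
    (∀ f g : LL S M o, LLdist f g ∈ closure S) ∧
    (∀ u : ℕ → LL S M o,
      (∀ ε > (0:ℝ), ∃ N, ∀ m ≥ N, ∀ n ≥ N, LLdist (u m) (u n) < ε) →
      ∃ f : LL S M o, ∀ ε > (0:ℝ), ∃ N, ∀ n ≥ N, LLdist (u n) f < ε) :=
  stmt16_general S hS h0 M o
end

section
/- Let S ⊆ [0,∞) with 0 ∈ S, and let H be a topological space. Let C(H,S) be the set of continuous functions from H to S (with the Euclidean topology on S). Define 𝒰(f,g) = min(1, sup_{x∈H} u_S(f(x), g(x))), where u_S(a,b) = max(a,b) for a ≠ b and u_S(a,a)=0. Then 𝒰 is an ultrametric on C(H,S) and the space (C(H,S), 𝒰) is complete. -/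
/-- The Delhommé–Laflamme–Pouzet–Sauer ultrametric on `[0,∞)`:
`uS a b = max a b` if `a ≠ b` and `0` otherwise. -/
noncomputable def uS (a b : ℝ) : ℝ := if a = b then 0 else max a b

/-- Continuous `S`-valued functions on `H`. -/
def CS (H : Type*) [TopologicalSpace H] (S : Set ℝ) : Type _ :=
  {f : H → ℝ // Continuous f ∧ ∀ x, f x ∈ S}

/-- The truncated sup-ultrametric `𝒰(f,g) = min (1, sup_x uS (f x) (g x))`, expressed
as an infimum so that it is also meaningful when the supremum is infinite (in which
case it equals `1`). -/
noncomputable def Udist {H : Type*} [TopologicalSpace H] {S : Set ℝ}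
    (f g : CS H S) : ℝ :=
  sInf {ε : ℝ | 1 ≤ ε ∨ (0 ≤ ε ∧ ∀ x, uS (f.1 x) (g.1 x) ≤ ε)}

/-!
Everything rests on `uS a b ≤ ε ↔ a = b ∨ (a ≤ ε ∧ b ≤ ε)` for `ε ≥ 0`, which makes the
ultrametric inequality immediate. Since `|a - b| ≤ uS a b` on `[0,∞)`, a `𝒰`-Cauchy sequence
converges pointwise to some `f`. At a point, a tail whose terms are pairwise `uS`-close within
`ε` is either constant or bounded by `ε`; in both cases its limit is `uS`-close within `ε` to
every term of the tail. So the convergence to `f` is uniform in `uS`, hence in `𝒰`, and `f` is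
continuous. Finally `f x ∈ S`: either the sequence at `x` is eventually constant, or its tails
lie below every `ε > 0` and the limit is `0 ∈ S`.
-/

open Set Filter Topology

lemma uS_comm (a b : ℝ) : uS a b = uS b a := by
  unfold uS
  by_cases h : a = b
  · simp [h]
  · rw [if_neg h, if_neg (Ne.symm h), max_comm]

lemma uS_le_iff {a b ε : ℝ} (hε : 0 ≤ ε) : uS a b ≤ ε ↔ a = b ∨ a ≤ ε ∧ b ≤ ε := by
  unfold uS
  split_ifs with h
  · simp [h, hε]
  · simp [h]

lemma uS_le_of_le_of_le {a b c ε : ℝ} (hε : 0 ≤ ε) (hac : uS a c ≤ ε) (hcb : uS c b ≤ ε) :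
    uS a b ≤ ε := by
  rw [uS_le_iff hε] at *
  rcases hac with rfl | ⟨ha, hc⟩ <;> rcases hcb with rfl | ⟨hc', hb⟩ <;> tauto

lemma abs_sub_le_uS {a b : ℝ} (ha : 0 ≤ a) (hb : 0 ≤ b) : |a - b| ≤ uS a b := by
  unfold uS
  split_ifs with h
  · simp [h]
  · rw [abs_sub_le_iff]
    constructor <;> linarith [le_max_left a b, le_max_right a b]

section Sequences

variable {a : ℕ → ℝ} {N : ℕ} {ε l : ℝ}

lemma eventually_const_or_le_of_uS_le (hε : 0 ≤ ε)
    (h : ∀ m ≥ N, ∀ n ≥ N, uS (a m) (a n) ≤ ε) :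
    (∀ n ≥ N, a n = a N) ∨ ∀ n ≥ N, a n ≤ ε := by
  refine or_iff_not_imp_left.2 fun hconst => ?_
  obtain ⟨m, hm, hmN⟩ := not_forall₂.1 hconst
  intro n hn
  have small_of_ne : ∀ k ≥ N, a n ≠ a k → a n ≤ ε := fun k hk hne =>
    (((uS_le_iff hε).1 (h n hn k hk)).resolve_left hne).1
  by_cases hnN : a n = a N
  · exact small_of_ne m hm (hnN ▸ Ne.symm hmN)
  · exact small_of_ne N le_rfl hnN

lemma uS_le_of_tendsto (hε : 0 ≤ ε) (h : ∀ m ≥ N, ∀ n ≥ N, uS (a m) (a n) ≤ ε)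
    (hl : Tendsto a atTop (𝓝 l)) : ∀ n ≥ N, uS (a n) l ≤ ε := by
  intro n hn
  rcases eventually_const_or_le_of_uS_le hε h with hconst | hsmall
  · have hlN : l = a N := tendsto_nhds_unique hl (tendsto_atTop_of_eventually_const hconst)
    exact (uS_le_iff hε).2 (Or.inl (by rw [hlN, hconst n hn]))
  · exact (uS_le_iff hε).2
      (Or.inr ⟨hsmall n hn, le_of_tendsto hl (eventually_atTop.2 ⟨N, hsmall⟩)⟩)

lemma cauchySeq_of_uS (ha : ∀ n, 0 ≤ a n)
    (hcauchy : ∀ ε > 0, ∃ N, ∀ m ≥ N, ∀ n ≥ N, uS (a m) (a n) ≤ ε) : CauchySeq a := by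
  refine Metric.cauchySeq_iff.2 fun ε hε => ?_
  obtain ⟨N, hN⟩ := hcauchy (ε / 2) (half_pos hε)
  exact ⟨N, fun m hm n hn =>
    (abs_sub_le_uS (ha m) (ha n)).trans_lt ((hN m hm n hn).trans_lt (half_lt_self hε))⟩

lemma mem_of_tendsto_of_uS {S : Set ℝ} (hS : S ⊆ Ici 0) (h0 : 0 ∈ S) (haS : ∀ n, a n ∈ S)
    (hcauchy : ∀ ε > 0, ∃ N, ∀ m ≥ N, ∀ n ≥ N, uS (a m) (a n) ≤ ε)
    (hl : Tendsto a atTop (𝓝 l)) : l ∈ S := by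
  by_cases hconst : ∃ N, ∀ n ≥ N, a n = a N
  · obtain ⟨N, hN⟩ := hconst
    rw [tendsto_nhds_unique hl (tendsto_atTop_of_eventually_const hN)]
    exact haS N
  have hl_le : l ≤ 0 := le_of_forall_gt_imp_ge_of_dense fun ε hε => by
    obtain ⟨N, hN⟩ := hcauchy ε hε
    have hsmall := (eventually_const_or_le_of_uS_le hε.le hN).resolve_left
      fun h => hconst ⟨N, h⟩
    exact le_of_tendsto hl (eventually_atTop.2 ⟨N, hsmall⟩)
  have hl_ge : 0 ≤ l := ge_of_tendsto' hl fun n => hS (haS n)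
  rwa [le_antisymm hl_le hl_ge]

end Sequences

lemma tendstoUniformly_of_uS_le {α : Type*} {F : ℕ → α → ℝ} {f : α → ℝ}
    (hF : ∀ n x, 0 ≤ F n x) (hf : ∀ x, 0 ≤ f x)
    (h : ∀ ε > 0, ∃ N, ∀ n ≥ N, ∀ x, uS (F n x) (f x) ≤ ε) :
    TendstoUniformly F f atTop := by
  refine Metric.tendstoUniformly_iff.2 fun ε hε => ?_
  obtain ⟨N, hN⟩ := h (ε / 2) (half_pos hε)
  filter_upwards [eventually_ge_atTop N] with n hn x
  rw [Real.dist_eq, abs_sub_comm]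
  exact (abs_sub_le_uS (hF n x) (hf x)).trans_lt ((hN n hn x).trans_lt (half_lt_self hε))

section Udist

variable {H : Type*} [TopologicalSpace H] {S : Set ℝ}

lemma Udist_nonneg (f g : CS H S) : 0 ≤ Udist f g :=
  le_csInf ⟨1, Or.inl le_rfl⟩ fun _ hε => hε.elim zero_le_one.trans And.left

lemma min_one_uS_le_Udist (f g : CS H S) (x : H) : min 1 (uS (f.1 x) (g.1 x)) ≤ Udist f g :=
  le_csInf ⟨1, Or.inl le_rfl⟩ fun _ hε =>
    hε.elim min_le_of_left_le fun h => min_le_of_right_le (h.2 x)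

lemma Udist_le_iff {f g : CS H S} {ε : ℝ} :
    Udist f g ≤ ε ↔ 1 ≤ ε ∨ 0 ≤ ε ∧ ∀ x, uS (f.1 x) (g.1 x) ≤ ε := by
  refine ⟨fun h => or_iff_not_imp_left.2 fun hε => ⟨(Udist_nonneg f g).trans h, fun x => ?_⟩,
    fun h => csInf_le ⟨0, fun _ hδ => hδ.elim zero_le_one.trans And.left⟩ h⟩
  exact (min_le_iff.1 ((min_one_uS_le_Udist f g x).trans h)).resolve_left hε

lemma uS_le_of_Udist_le {f g : CS H S} {ε : ℝ} (hε : ε < 1) (h : Udist f g ≤ ε) (x : H) :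
    uS (f.1 x) (g.1 x) ≤ ε :=
  ((Udist_le_iff.1 h).resolve_left hε.not_ge).2 x

lemma Udist_eq_zero_iff (hS : S ⊆ Ici 0) {f g : CS H S} : Udist f g = 0 ↔ f = g := by
  rw [← (Udist_nonneg f g).ge_iff_eq', Udist_le_iff]
  constructor
  · rintro (h | ⟨-, h⟩)
    · exact absurd h (by norm_num)
    · refine Subtype.ext (funext fun x => ?_)
      rcases (uS_le_iff le_rfl).1 (h x) with hx | ⟨hf, hg⟩
      · exact hx
      · exact (le_antisymm hf (hS (f.2.2 x))).trans (le_antisymm hg (hS (g.2.2 x))).symm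
  · rintro rfl
    exact Or.inr ⟨le_rfl, fun x => (uS_le_iff le_rfl).2 (Or.inl rfl)⟩

lemma Udist_comm (f g : CS H S) : Udist f g = Udist g f := by
  simp only [Udist, uS_comm (f.1 _)]

lemma Udist_le_max (f g h : CS H S) : Udist f g ≤ max (Udist f h) (Udist h g) := by
  set M := max (Udist f h) (Udist h g)
  rcases le_or_gt 1 M with hM | hM
  · exact Udist_le_iff.2 (Or.inl hM)
  have hM0 : 0 ≤ M := (Udist_nonneg f h).trans (le_max_left _ _)
  exact Udist_le_iff.2 (Or.inr ⟨hM0, fun x => uS_le_of_le_of_le hM0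
    (uS_le_of_Udist_le hM (le_max_left _ _) x) (uS_le_of_Udist_le hM (le_max_right _ _) x)⟩)

lemma uS_cauchy_of_Udist_cauchy {u : ℕ → CS H S}
    (hu : ∀ ε > 0, ∃ N, ∀ m ≥ N, ∀ n ≥ N, Udist (u m) (u n) < ε) :
    ∀ ε > 0, ∃ N, ∀ m ≥ N, ∀ n ≥ N, ∀ x, uS ((u m).1 x) ((u n).1 x) ≤ ε := by
  intro ε hε
  obtain ⟨N, hN⟩ := hu (min ε (1 / 2)) (by positivity)
  have hlt_one : min ε (1 / 2) < 1 := (min_le_right _ _).trans_lt (by norm_num)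
  exact ⟨N, fun m hm n hn x =>
    (uS_le_of_Udist_le hlt_one (hN m hm n hn).le x).trans (min_le_left _ _)⟩

theorem exists_tendsto_Udist_of_cauchy (hS : S ⊆ Ici 0) (h0 : 0 ∈ S) {u : ℕ → CS H S}
    (hu : ∀ ε > 0, ∃ N, ∀ m ≥ N, ∀ n ≥ N, Udist (u m) (u n) < ε) :
    ∃ f : CS H S, ∀ ε > 0, ∃ N, ∀ n ≥ N, Udist (u n) f < ε := by
  have hu0 : ∀ n x, 0 ≤ (u n).1 x := fun n x => hS ((u n).2.2 x)
  have hunif := uS_cauchy_of_Udist_cauchy hu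
  have hpt : ∀ x, ∀ ε > 0, ∃ N, ∀ m ≥ N, ∀ n ≥ N, uS ((u m).1 x) ((u n).1 x) ≤ ε :=
    fun x ε hε => (hunif ε hε).imp fun _ hN m hm n hn => hN m hm n hn x
  choose f hf using fun x =>
    cauchySeq_tendsto_of_complete (cauchySeq_of_uS (fun n => hu0 n x) (hpt x))
  have hfS : ∀ x, f x ∈ S := fun x =>
    mem_of_tendsto_of_uS hS h0 (fun n => (u n).2.2 x) (hpt x) (hf x)
  have hlim : ∀ ε > 0, ∃ N, ∀ n ≥ N, ∀ x, uS ((u n).1 x) (f x) ≤ ε := fun ε hε =>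
    (hunif ε hε).imp fun _ hN n hn x =>
      uS_le_of_tendsto hε.le (fun m hm k hk => hN m hm k hk x) (hf x) n hn
  have hfc : Continuous f := (tendstoUniformly_of_uS_le hu0 (fun x => hS (hfS x)) hlim).continuous
    (Eventually.of_forall fun n => (u n).2.1).frequently
  refine ⟨⟨f, hfc, hfS⟩, fun ε hε => ?_⟩
  obtain ⟨N, hN⟩ := hlim (ε / 2) (half_pos hε)
  exact ⟨N, fun n hn =>
    (Udist_le_iff.2 (Or.inr ⟨(half_pos hε).le, hN n hn⟩)).trans_lt (half_lt_self hε)⟩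

end Udist

/-- `(C(H,S), 𝒰)` is a complete ultrametric space. -/
theorem stmt18 (S : Set ℝ) (hS : S ⊆ Set.Ici 0) (h0 : (0:ℝ) ∈ S)
    (H : Type*) [TopologicalSpace H] :
    (∀ f g : CS H S, 0 ≤ Udist f g) ∧
    (∀ f g : CS H S, Udist f g = 0 ↔ f = g) ∧
    (∀ f g : CS H S, Udist f g = Udist g f) ∧
    (∀ f g h : CS H S, Udist f g ≤ max (Udist f h) (Udist h g)) ∧
    (∀ u : ℕ → CS H S,
      (∀ ε > (0:ℝ), ∃ N, ∀ m ≥ N, ∀ n ≥ N, Udist (u m) (u n) < ε) →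
      ∃ f : CS H S, ∀ ε > (0:ℝ), ∃ N, ∀ n ≥ N, Udist (u n) f < ε) :=
  ⟨Udist_nonneg, fun _ _ => Udist_eq_zero_iff hS, Udist_comm, Udist_le_max,
    fun _ hu => exists_tendsto_Udist_of_cauchy hS h0 hu⟩
end

section
/- Let S ⊆ [0,∞) with 0 ∈ S, let T ⊆ S be a countable subset containing 0 that is dense in S, let X be a finite set, and let d be an ultrametric on X with all values in S. Then for every ε > 0 there exists an ultrametric e on X with all values in T such that |d(x,y) − e(x,y)| < ε for all x, y ∈ X. -/
/-- An `S`-valued ultrametric on a finite set can be approximated,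
uniformly within `ε`, by a `T`-valued ultrametric, for any countable dense range
subset `T` of `S`. -/
theorem stmt19 (S T : Set ℝ) (hS : S ⊆ Set.Ici 0) (h0S : (0:ℝ) ∈ S)
    (hTS : T ⊆ S) (h0T : (0:ℝ) ∈ T) (hTcount : T.Countable)
    (hTdense : S ⊆ closure T)
    (X : Type*) [Finite X] (d : X → X → ℝ)
    (hd_nonneg : ∀ x y, 0 ≤ d x y)
    (hd_eq : ∀ x y, d x y = 0 ↔ x = y)
    (hd_symm : ∀ x y, d x y = d y x)
    (hd_ultra : ∀ x y z, d x y ≤ max (d x z) (d z y))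
    (hd_val : ∀ x y, d x y ∈ S)
    (ε : ℝ) (hε : 0 < ε) :
    ∃ e : X → X → ℝ,
      (∀ x y, 0 ≤ e x y) ∧
      (∀ x y, e x y = 0 ↔ x = y) ∧
      (∀ x y, e x y = e y x) ∧
      (∀ x y z, e x y ≤ max (e x z) (e z y)) ∧
      (∀ x y, e x y ∈ T) ∧
      (∀ x y, |d x y - e x y| < ε) := by
  classical
  set V : Set ℝ := {r | ∃ x y, x ≠ y ∧ d x y = r} with hVdef
  have hVfin : V.Finite := by
    apply Set.Finite.subset (Set.finite_range (fun p : X × X => d p.1 p.2))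
    rintro r ⟨x, y, -, rfl⟩; exact ⟨(x, y), rfl⟩
  have hVpos : ∀ v ∈ V, 0 < v := by
    rintro v ⟨x, y, hxy, rfl⟩
    exact lt_of_le_of_ne (hd_nonneg x y) (fun h => hxy ((hd_eq x y).1 h.symm))
  have h0V : (0:ℝ) ∉ V := fun h => lt_irrefl 0 (hVpos 0 h)
  have hVS : ∀ v ∈ V, v ∈ S := by rintro v ⟨x, y, -, rfl⟩; exact hd_val x y
  set W : Set ℝ := insert 0 V with hWdef
  have hWfin : W.Finite := hVfin.insert 0
  have h0W : (0:ℝ) ∈ W := Set.mem_insert 0 V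
  have hdW : ∀ x y, d x y ∈ W := by
    intro x y
    by_cases h : x = y
    · subst h
      have : d x x = 0 := (hd_eq x x).2 rfl
      rw [this]; exact h0W
    · exact Set.mem_insert_of_mem _ ⟨x, y, h, rfl⟩
  have hWnn : ∀ w ∈ W, 0 ≤ w := by
    rintro w (rfl | hw)
    · exact le_refl 0
    · exact (hVpos w hw).le
  -- build the finset of half-gaps
  set F := hWfin.toFinset with hF
  set s := ((F ×ˢ F).filter (fun p => p.1 < p.2)).image (fun p => (p.2 - p.1)/2) with hs
  have hne : (insert ε s).Nonempty := Finset.insert_nonempty _ _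
  set η := (insert ε s).min' hne with hη
  have hηε : η ≤ ε := Finset.min'_le _ _ (Finset.mem_insert_self _ _)
  have hηpos : 0 < η := by
    rw [hη, Finset.lt_min'_iff]
    intro x hx
    rcases Finset.mem_insert.1 hx with rfl | hx
    · exact hε
    · simp only [hs, Finset.mem_image, Finset.mem_filter, Finset.mem_product] at hx
      obtain ⟨⟨u, v⟩, ⟨⟨hu, hv⟩, huv⟩, rfl⟩ := hx
      simp only at huv ⊢
      linarith
  have hgap : ∀ u ∈ W, ∀ v ∈ W, u < v → 2 * η ≤ v - u := by
    intro u hu v hv huv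
    have hmem : (v - u)/2 ∈ s := by
      simp only [hs, Finset.mem_image, Finset.mem_filter, Finset.mem_product]
      exact ⟨(u, v), ⟨⟨hWfin.mem_toFinset.2 hu, hWfin.mem_toFinset.2 hv⟩, huv⟩, rfl⟩
    have := Finset.min'_le (insert ε s) _ (Finset.mem_insert_of_mem hmem)
    rw [← hη] at this
    linarith
  -- choose approximating values
  have hex : ∀ v : ℝ, ∃ t, t ∈ T ∧ (v ∈ V → |v - t| < η) ∧ (v ∉ V → t = 0) := by
    intro v
    by_cases hv : v ∈ V
    · have hvc : v ∈ closure T := hTdense (hVS v hv)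
      rw [Metric.mem_closure_iff] at hvc
      obtain ⟨t, htT, htd⟩ := hvc η hηpos
      exact ⟨t, htT, fun _ => by rwa [Real.dist_eq] at htd, fun h => absurd hv h⟩
    · exact ⟨0, h0T, fun h => absurd h hv, fun _ => rfl⟩
  choose g hgT hgV hg0 using hex
  have hg00 : g 0 = 0 := hg0 0 h0V
  -- strict monotonicity on W
  have hmono : ∀ u ∈ W, ∀ v ∈ W, u < v → g u < g v := by
    intro u hu v hv huv
    have hvV : v ∈ V := by
      rcases hv with rfl | hv
      · exact absurd (lt_of_le_of_lt (hWnn u hu) huv) (lt_irrefl 0)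
      · exact hv
    have hgvlb : v - η < g v := by
      have h := abs_lt.1 (hgV v hvV)
      linarith [h.2]
    rcases hu with rfl | huV
    · rw [hg00]
      have := hgap 0 h0W v hv huv
      linarith
    · have hguub : g u < u + η := by
        have h := abs_lt.1 (hgV u huV)
        linarith [h.1]
      have := hgap u (Set.mem_insert_of_mem _ huV) v hv huv
      linarith
  have hle : ∀ u ∈ W, ∀ v ∈ W, u ≤ v → g u ≤ g v := by
    intro u hu v hv huv
    rcases lt_or_eq_of_le huv with h | rfl
    · exact (hmono u hu v hv h).le
    · exact le_refl _
  have hgpos : ∀ v ∈ V, 0 < g v := by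
    intro v hv
    have := hmono 0 h0W v (Set.mem_insert_of_mem _ hv) (hVpos v hv)
    rwa [hg00] at this
  refine ⟨fun x y => g (d x y), ?_, ?_, ?_, ?_, ?_, ?_⟩
  · intro x y
    show 0 ≤ g (d x y)
    by_cases h : x = y
    · subst h; rw [(hd_eq x x).2 rfl, hg00]
    · exact (hgpos _ ⟨x, y, h, rfl⟩).le
  · intro x y
    show g (d x y) = 0 ↔ x = y
    constructor
    · intro h
      by_contra hxy
      exact absurd h (ne_of_gt (hgpos _ ⟨x, y, hxy, rfl⟩))
    · rintro rfl
      rw [(hd_eq x x).2 rfl, hg00]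
  · intro x y; show g (d x y) = g (d y x); rw [hd_symm x y]
  · intro x y z
    show g (d x y) ≤ max (g (d x z)) (g (d z y))
    have h1 := hd_ultra x y z
    rcases max_cases (d x z) (d z y) with ⟨hm, -⟩ | ⟨hm, -⟩ <;> rw [hm] at h1
    · exact le_trans (hle _ (hdW x y) _ (hdW x z) h1) (le_max_left _ _)
    · exact le_trans (hle _ (hdW x y) _ (hdW z y) h1) (le_max_right _ _)
  · intro x y; exact hgT _
  · intro x y
    show |d x y - g (d x y)| < ε
    by_cases h : x = y
    · subst h
      rw [(hd_eq x x).2 rfl, hg00]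
      simpa using hε
    · exact lt_of_lt_of_le (hgV _ ⟨x, y, h, rfl⟩) hηε
end
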